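/- Set λ_H := ρ1 and λ_L := ρ0 + β·p·(ρ0 − ρ1). If λ ≥ λ_H then V0(π,λ) ≥ V1(π,λ) for all π ∈ [0,1] (not playing is optimal at every belief), and if λ ≤ λ_L then V1(π,λ) ≥ V0(π,λ) for all π ∈ [0,1] (playing is optimal at every belief). -/

import Mathlib

/-!
Both thresholds come from explicit fixed points of the Bellman equation. For `λ ≥ ρ1` the
constant `λ / (1 - β)` (never play) solves it, and for `λ ≤ ρ0 + β p (ρ0 - ρ1)` so does
`π ρ0 + (1 - π) ρ1 + β ρ0 / (1 - β)` (play now, and forever after from belief `1`). The Bellman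
operator is a `β`-contraction in the sup norm on `[0, 1]`, so a bounded solution is unique and
`V(·, λ)` is the explicit one; there the claimed inequality between `V0` and `V1` is checked directly.
-/

open Set

lemma nonpos_of_forall_le_imp_le_mul {α : Type*} {s : Set α} {f : α → ℝ} {β : ℝ} (hβ : β < 1)
    (hbdd : BddAbove (f '' s)) (hstep : ∀ D, (∀ x ∈ s, f x ≤ D) → ∀ x ∈ s, f x ≤ β * D) :
    ∀ x ∈ s, f x ≤ 0 := by
  rcases s.eq_empty_or_nonempty with rfl | hs
  · simp
  have hle : ∀ x ∈ s, f x ≤ sSup (f '' s) := fun x hx => le_csSup hbdd (mem_image_of_mem f hx)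
  have hsup : sSup (f '' s) ≤ β * sSup (f '' s) :=
    csSup_le (hs.image f) (forall_mem_image.2 (hstep _ hle))
  intro x hx
  nlinarith [hle x hx]

lemma abs_max_add_mul_sub_max_add_mul_le {a b u v u' v' β D : ℝ} (hβ : 0 ≤ β)
    (hu : |u - u'| ≤ D) (hv : |v - v'| ≤ D) :
    |max (a + β * u) (b + β * v) - max (a + β * u') (b + β * v')| ≤ β * D := by
  have key : ∀ {c w w' : ℝ}, |w - w'| ≤ D → |c + β * w - (c + β * w')| ≤ β * D := by
    intro c w w' h
    rw [add_sub_add_left_eq_sub, ← mul_sub, abs_mul, abs_of_nonneg hβ]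
    exact mul_le_mul_of_nonneg_left h hβ
  exact (abs_max_sub_max_le_max _ _ _ _).trans (max_le (key hu) (key hv))

namespace DiscountedPlay

variable (p ρ0 ρ1 β lam : ℝ)

def notPlayValue (V : ℝ → ℝ) (π : ℝ) : ℝ := lam + β * V ((1 - p) * π)

def playValue (V : ℝ → ℝ) (π : ℝ) : ℝ := π * ρ0 + (1 - π) * ρ1 + β * V 1

def bellman (V : ℝ → ℝ) (π : ℝ) : ℝ :=
  max (notPlayValue p β lam V π) (playValue ρ0 ρ1 β V π)

/-- The value of playing at belief `π` and at every later step (the belief is `1` after a play). -/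
noncomputable def alwaysPlay (π : ℝ) : ℝ := π * ρ0 + (1 - π) * ρ1 + β * ρ0 / (1 - β)

variable {p ρ0 ρ1 β lam}

lemma one_sub_mul_mem_Icc (hp0 : 0 ≤ p) (hp1 : p ≤ 1) {π : ℝ} (hπ : π ∈ Icc (0 : ℝ) 1) :
    (1 - p) * π ∈ Icc (0 : ℝ) 1 :=
  unitInterval.mul_mem ⟨by linarith, by linarith⟩ hπ

lemma notPlayValue_congr (hp0 : 0 ≤ p) (hp1 : p ≤ 1) {V W : ℝ → ℝ} (h : EqOn V W (Icc 0 1))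
    {π : ℝ} (hπ : π ∈ Icc (0 : ℝ) 1) :
    notPlayValue p β lam V π = notPlayValue p β lam W π := by
  rw [notPlayValue, notPlayValue, h (one_sub_mul_mem_Icc hp0 hp1 hπ)]

lemma playValue_congr {V W : ℝ → ℝ} (h : EqOn V W (Icc 0 1)) (π : ℝ) :
    playValue ρ0 ρ1 β V π = playValue ρ0 ρ1 β W π := by
  rw [playValue, playValue, h ⟨zero_le_one, le_rfl⟩]

lemma eqOn_of_eq_bellman (hp0 : 0 ≤ p) (hp1 : p ≤ 1) (hβ0 : 0 ≤ β) (hβ1 : β < 1)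
    {V W : ℝ → ℝ} (hVbd : ∃ C, ∀ π ∈ Icc (0 : ℝ) 1, |V π| ≤ C)
    (hWbd : ∃ C, ∀ π ∈ Icc (0 : ℝ) 1, |W π| ≤ C)
    (hV : ∀ π ∈ Icc (0 : ℝ) 1, V π = bellman p ρ0 ρ1 β lam V π)
    (hW : ∀ π ∈ Icc (0 : ℝ) 1, W π = bellman p ρ0 ρ1 β lam W π) :
    EqOn V W (Icc 0 1) := by
  obtain ⟨C, hC⟩ := hVbd
  obtain ⟨C', hC'⟩ := hWbd
  have hbdd : BddAbove ((fun π => |V π - W π|) '' Icc 0 1) :=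
    ⟨C + C', forall_mem_image.2 fun π hπ => (abs_sub _ _).trans (add_le_add (hC π hπ) (hC' π hπ))⟩
  have hzero := nonpos_of_forall_le_imp_le_mul hβ1 hbdd fun D hD π hπ => by
    rw [hV π hπ, hW π hπ]
    exact abs_max_add_mul_sub_max_add_mul_le hβ0 (hD _ (one_sub_mul_mem_Icc hp0 hp1 hπ)) (hD 1 ⟨zero_le_one, le_rfl⟩)
  exact fun π hπ => sub_eq_zero.mp (abs_nonpos_iff.mp (hzero π hπ))

lemma notPlayValue_const (hβ : β ≠ 1) (π : ℝ) :
    notPlayValue p β lam (fun _ => lam / (1 - β)) π = lam / (1 - β) := by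
  unfold notPlayValue
  field_simp [sub_ne_zero.2 hβ.symm]
  ring

lemma playValue_le_notPlayValue_const (hρ : ρ0 ≤ ρ1) (hlam : ρ1 ≤ lam) {π : ℝ}
    (hπ : π ∈ Icc (0 : ℝ) 1) :
    playValue ρ0 ρ1 β (fun _ => lam / (1 - β)) π
      ≤ notPlayValue p β lam (fun _ => lam / (1 - β)) π := by
  unfold playValue notPlayValue
  nlinarith [hπ.1]

lemma bellman_const (hρ : ρ0 ≤ ρ1) (hlam : ρ1 ≤ lam) (hβ : β ≠ 1) {π : ℝ}
    (hπ : π ∈ Icc (0 : ℝ) 1) :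
    bellman p ρ0 ρ1 β lam (fun _ => lam / (1 - β)) π = lam / (1 - β) := by
  rw [bellman, max_eq_left (playValue_le_notPlayValue_const hρ hlam hπ), notPlayValue_const hβ]

lemma playValue_alwaysPlay (hβ : β ≠ 1) (π : ℝ) :
    playValue ρ0 ρ1 β (alwaysPlay ρ0 ρ1 β) π = alwaysPlay ρ0 ρ1 β π := by
  unfold playValue alwaysPlay
  field_simp [sub_ne_zero.2 hβ.symm]
  ring

lemma notPlayValue_le_playValue_alwaysPlay (hp0 : 0 ≤ p) (hρ : ρ0 ≤ ρ1) (hβ0 : 0 ≤ β)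
    (hβ1 : β < 1) (hlam : lam ≤ ρ0 + β * p * (ρ0 - ρ1)) {π : ℝ} (hπ : π ∈ Icc (0 : ℝ) 1) :
    notPlayValue p β lam (alwaysPlay ρ0 ρ1 β) π ≤ playValue ρ0 ρ1 β (alwaysPlay ρ0 ρ1 β) π := by
  rw [playValue_alwaysPlay hβ1.ne]
  unfold notPlayValue alwaysPlay
  -- the slack is affine in `π` and equals the gap in `hlam` at `π = 1`
  have hslack : 0 ≤ (1 - π) * ((ρ1 - ρ0) * (1 - β * (1 - p))) :=
    mul_nonneg (by linarith [hπ.2]) (mul_nonneg (by linarith) (by nlinarith))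
  have hK : (1 - β) * (β * ρ0 / (1 - β)) = β * ρ0 := mul_div_cancel₀ _ (by linarith)
  nlinarith

lemma bellman_alwaysPlay (hp0 : 0 ≤ p) (hρ : ρ0 ≤ ρ1) (hβ0 : 0 ≤ β) (hβ1 : β < 1)
    (hlam : lam ≤ ρ0 + β * p * (ρ0 - ρ1)) {π : ℝ} (hπ : π ∈ Icc (0 : ℝ) 1) :
    bellman p ρ0 ρ1 β lam (alwaysPlay ρ0 ρ1 β) π = alwaysPlay ρ0 ρ1 β π := by
  rw [bellman, max_eq_right (notPlayValue_le_playValue_alwaysPlay hp0 hρ hβ0 hβ1 hlam hπ),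
    playValue_alwaysPlay hβ1.ne]

lemma abs_alwaysPlay_le {π : ℝ} (hπ : π ∈ Icc (0 : ℝ) 1) :
    |alwaysPlay ρ0 ρ1 β π| ≤ |ρ0| + |ρ1| + |β * ρ0 / (1 - β)| := by
  unfold alwaysPlay
  refine (abs_add_le _ _).trans (add_le_add ((abs_add_le _ _).trans (add_le_add ?_ ?_)) le_rfl)
  · rw [abs_mul, abs_of_nonneg hπ.1]
    exact mul_le_of_le_one_left (abs_nonneg _) hπ.2
  · rw [abs_mul, abs_of_nonneg (by linarith [hπ.2])]
    exact mul_le_of_le_one_left (abs_nonneg _) (by linarith [hπ.1])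

end DiscountedPlay

open DiscountedPlay

theorem stmt_4_general (p ρ0 ρ1 β : ℝ)
    (hp0 : 0 < p) (hp1 : p < 1) (hr01 : ρ0 < ρ1)
    (hb0 : 0 < β) (hb1 : β < 1)
    (V : ℝ → ℝ → ℝ)
    (hVbd : ∀ lam : ℝ, ∃ C : ℝ, ∀ π ∈ Set.Icc (0:ℝ) 1, |V π lam| ≤ C)
    (hVeq : ∀ lam : ℝ, ∀ π ∈ Set.Icc (0:ℝ) 1,
      V π lam = max (lam + β * V ((1 - p) * π) lam)
        (π * ρ0 + (1 - π) * ρ1 + β * V 1 lam)) :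
    (∀ lam : ℝ, ρ1 ≤ lam → ∀ π ∈ Set.Icc (0:ℝ) 1,
      π * ρ0 + (1 - π) * ρ1 + β * V 1 lam ≤ lam + β * V ((1 - p) * π) lam) ∧
    (∀ lam : ℝ, lam ≤ ρ0 + β * p * (ρ0 - ρ1) → ∀ π ∈ Set.Icc (0:ℝ) 1,
      lam + β * V ((1 - p) * π) lam ≤ π * ρ0 + (1 - π) * ρ1 + β * V 1 lam) := by
  refine ⟨fun lam hlam π hπ => ?_, fun lam hlam π hπ => ?_⟩
  · have hV : EqOn (V · lam) (fun _ => lam / (1 - β)) (Icc 0 1) :=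
      eqOn_of_eq_bellman hp0.le hp1.le hb0.le hb1 (hVbd lam) ⟨_, fun _ _ => le_rfl⟩ (hVeq lam)
        fun σ hσ => (bellman_const hr01.le hlam hb1.ne hσ).symm
    show playValue ρ0 ρ1 β (V · lam) π ≤ notPlayValue p β lam (V · lam) π
    rw [playValue_congr hV, notPlayValue_congr hp0.le hp1.le hV hπ]
    exact playValue_le_notPlayValue_const hr01.le hlam hπ
  · have hV : EqOn (V · lam) (alwaysPlay ρ0 ρ1 β) (Icc 0 1) :=
      eqOn_of_eq_bellman hp0.le hp1.le hb0.le hb1 (hVbd lam) ⟨_, fun _ => abs_alwaysPlay_le⟩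
        (hVeq lam) fun σ hσ => (bellman_alwaysPlay hp0.le hr01.le hb0.le hb1 hlam hσ).symm
    show notPlayValue p β lam (V · lam) π ≤ playValue ρ0 ρ1 β (V · lam) π
    rw [playValue_congr hV, notPlayValue_congr hp0.le hp1.le hV hπ]
    exact notPlayValue_le_playValue_alwaysPlay hp0.le hr01.le hb0.le hb1 hlam hπ

theorem stmt_4 (p ρ0 ρ1 β : ℝ)
    (hp0 : 0 < p) (hp1 : p < 1) (hr0 : 0 < ρ0) (hr01 : ρ0 < ρ1) (hr1 : ρ1 < 1)
    (hb0 : 0 < β) (hb1 : β < 1)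
    (V : ℝ → ℝ → ℝ)
    (hVbd : ∀ lam : ℝ, ∃ C : ℝ, ∀ π ∈ Set.Icc (0:ℝ) 1, |V π lam| ≤ C)
    (hVeq : ∀ lam : ℝ, ∀ π ∈ Set.Icc (0:ℝ) 1,
      V π lam = max (lam + β * V ((1 - p) * π) lam)
        (π * ρ0 + (1 - π) * ρ1 + β * V 1 lam)) :
    (∀ lam : ℝ, ρ1 ≤ lam → ∀ π ∈ Set.Icc (0:ℝ) 1,
      π * ρ0 + (1 - π) * ρ1 + β * V 1 lam ≤ lam + β * V ((1 - p) * π) lam) ∧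
    (∀ lam : ℝ, lam ≤ ρ0 + β * p * (ρ0 - ρ1) → ∀ π ∈ Set.Icc (0:ℝ) 1,
      lam + β * V ((1 - p) * π) lam ≤ π * ρ0 + (1 - π) * ρ1 + β * V 1 lam) :=
  stmt_4_general p ρ0 ρ1 β hp0 hp1 hr01 hb0 hb1 V hVbd hVeq
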